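/- arXiv:1212.5289 — 2 statements merged into one kernel-verified Lean document; each statement's English description precedes it below -/
import Mathlib

section
/- For every integer q ≥ 1 and every diagonal matrix T with nonnegative real diagonal entries, the max-plus power (G ⊗ T)^q is entrywise dominated by the max-plus sum (H ⊗ T) ⊕ (H ⊗ T)² ⊕ ⋯ ⊕ (H ⊗ T)ⁿ. -/
open Finset

noncomputable section

/-- Max-plus matrix product over `R_ε = ℝ ∪ {-∞}` (modeled as `WithBot ℝ`):
`(A ⊗ B) i j = max_k (A i k + B k j)`, with `⊥` playing the role of `ε`. -/
def mpMul {n : ℕ} (A B : Matrix (Fin n) (Fin n) (WithBot ℝ)) :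
    Matrix (Fin n) (Fin n) (WithBot ℝ) :=
  Matrix.of fun i j => Finset.univ.sup fun k => A i k + B k j

/-- Max-plus identity matrix `E`: `0` on the diagonal, `ε = ⊥` elsewhere. -/
def mpId (n : ℕ) : Matrix (Fin n) (Fin n) (WithBot ℝ) :=
  Matrix.of fun i j => if i = j then (0 : WithBot ℝ) else ⊥

/-- Max-plus matrix power (zeroth power is the identity `E`). -/
def mpPow {n : ℕ} (A : Matrix (Fin n) (Fin n) (WithBot ℝ)) :
    ℕ → Matrix (Fin n) (Fin n) (WithBot ℝ)
  | 0 => mpId n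
  | q + 1 => mpMul (mpPow A q) A

/-- The tandem support matrix `H`: `h i j = 0` if `j = i + 1`, `ε` otherwise. -/
def tandemH (n : ℕ) : Matrix (Fin n) (Fin n) (WithBot ℝ) :=
  Matrix.of fun i j => if (i : ℕ) + 1 = (j : ℕ) then (0 : WithBot ℝ) else ⊥

/-- Diagonal matrix with (real) diagonal entries `t i` and `ε = ⊥` off the diagonal. -/
def mpDiag {n : ℕ} (t : Fin n → ℝ) : Matrix (Fin n) (Fin n) (WithBot ℝ) :=
  Matrix.of fun i j => if i = j then (t i : WithBot ℝ) else ⊥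

/-- Max-plus (entrywise max) sum of a family of matrices over a finite index set. -/
def mpSup {n : ℕ} (s : Finset ℕ) (f : ℕ → Matrix (Fin n) (Fin n) (WithBot ℝ)) :
    Matrix (Fin n) (Fin n) (WithBot ℝ) :=
  Matrix.of fun i j => s.sup fun q => f q i j

/-- The all-`ε` matrix `𝓔`. -/
def botMat (n : ℕ) : Matrix (Fin n) (Fin n) (WithBot ℝ) :=
  Matrix.of fun _ _ => (⊥ : WithBot ℝ)

/-- Max-plus matrix-vector product: `(A ⊗ v) i = max_j (A i j + v j)`. -/
def mpMulVec {n : ℕ} (A : Matrix (Fin n) (Fin n) (WithBot ℝ)) (v : Fin n → WithBot ℝ) :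
    Fin n → WithBot ℝ :=
  fun i => Finset.univ.sup fun j => A i j + v j

lemma mpMul_apply {n : ℕ} (A B : Matrix (Fin n) (Fin n) (WithBot ℝ)) (i j : Fin n) :
    mpMul A B i j = Finset.univ.sup fun k => A i k + B k j := rfl

lemma mpPow_succ_apply {n : ℕ} (A : Matrix (Fin n) (Fin n) (WithBot ℝ)) (m : ℕ) (i j : Fin n) :
    mpPow A (m + 1) i j = Finset.univ.sup fun k => mpPow A m i k + A k j := rfl

lemma sum_Ioc_split {n : ℕ} (t : Fin n → ℝ) {i k j : Fin n} (h1 : i ≤ k) (h2 : k ≤ j) :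
    (∑ x ∈ Finset.Ioc i k, t x) + ∑ x ∈ Finset.Ioc k j, t x = ∑ x ∈ Finset.Ioc i j, t x := by
  have hd : Disjoint (Finset.Ioc i k) (Finset.Ioc k j) :=
    Finset.disjoint_left.mpr fun x hx hx' =>
      ((Finset.mem_Ioc.mp hx).2.not_gt (Finset.mem_Ioc.mp hx').1)
  have hu : Finset.Ioc i k ∪ Finset.Ioc k j = Finset.Ioc i j := by
    ext x
    simp only [Finset.mem_union, Finset.mem_Ioc, Fin.lt_def, Fin.le_def]
    omega
  have h := Finset.sum_union (f := t) hd
  rw [hu] at h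
  exact h.symm

lemma mpMul_diag_apply {n : ℕ} (A : Matrix (Fin n) (Fin n) (WithBot ℝ)) (t : Fin n → ℝ)
    (i j : Fin n) : mpMul A (mpDiag t) i j = A i j + (t j : WithBot ℝ) := by
  unfold mpMul mpDiag
  simp only [Matrix.of_apply]
  apply le_antisymm
  · apply Finset.sup_le
    intro k _
    by_cases h : k = j
    · subst h; simp
    · simp [h]
  · have := Finset.le_sup
      (f := fun k => A i k + (if k = j then ((t k : ℝ) : WithBot ℝ) else ⊥))
      (Finset.mem_univ j)
    simpa using this

lemma mpId_mul_apply {n : ℕ} (A : Matrix (Fin n) (Fin n) (WithBot ℝ))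
    (i j : Fin n) : mpMul (mpId n) A i j = A i j := by
  unfold mpMul mpId
  simp only [Matrix.of_apply]
  apply le_antisymm
  · apply Finset.sup_le
    intro k _
    by_cases h : i = k
    · subst h; simp
    · simp [h]
  · have := Finset.le_sup
      (f := fun k => (if i = k then (0 : WithBot ℝ) else ⊥) + A k j)
      (Finset.mem_univ i)
    simpa using this

lemma tandem_pow_apply {n : ℕ} (t : Fin n → ℝ) (m : ℕ) (i j : Fin n) :
    mpPow (mpMul (tandemH n) (mpDiag t)) m i j =
      if (i : ℕ) + m = (j : ℕ) then ((∑ k ∈ Finset.Ioc i j, t k : ℝ) : WithBot ℝ) else ⊥ := by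
  induction m generalizing j with
  | zero =>
    show mpId n i j = _
    unfold mpId
    simp only [Matrix.of_apply, Nat.add_zero]
    by_cases h : i = j
    · subst h
      simp
    · have : (i : ℕ) ≠ (j : ℕ) := fun hv => h (Fin.ext hv)
      simp [h, this]
  | succ m ih =>
    rw [mpPow_succ_apply]
    have hterm : ∀ k : Fin n,
        mpPow (mpMul (tandemH n) (mpDiag t)) m i k + mpMul (tandemH n) (mpDiag t) k j
        = (if (i : ℕ) + m = (k : ℕ) then ((∑ x ∈ Finset.Ioc i k, t x : ℝ) : WithBot ℝ) else ⊥)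
          + ((if (k : ℕ) + 1 = (j : ℕ) then (0 : WithBot ℝ) else ⊥) + (t j : WithBot ℝ)) := by
      intro k
      rw [ih k, mpMul_diag_apply]
      rfl
    by_cases hij : (i : ℕ) + (m + 1) = (j : ℕ)
    · -- the unique contributing index
      have hklt : (i : ℕ) + m < n := by omega
      set k0 : Fin n := ⟨(i : ℕ) + m, hklt⟩ with hk0
      have hik0 : i ≤ k0 := by
        simp [Fin.le_def, hk0]
      have hk0j : k0 < j := by
        simp [Fin.lt_def, hk0]; omega
      have hIoc : Finset.Ioc k0 j = {j} := by
        ext x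
        simp only [Finset.mem_Ioc, Finset.mem_singleton, Fin.lt_def, Fin.le_def, hk0]
        constructor
        · rintro ⟨h1, h2⟩
          apply Fin.ext
          omega
        · rintro rfl
          constructor
          · omega
          · exact le_refl _
      have hsum : (∑ x ∈ Finset.Ioc i k0, t x) + t j = ∑ x ∈ Finset.Ioc i j, t x := by
        rw [← sum_Ioc_split t hik0 (le_of_lt hk0j), hIoc, Finset.sum_singleton]
      rw [if_pos hij]
      apply le_antisymm
      · apply Finset.sup_le
        intro k _
        rw [hterm k]
        by_cases h1 : (i : ℕ) + m = (k : ℕ)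
        · by_cases h2 : (k : ℕ) + 1 = (j : ℕ)
          · have hkk0 : k = k0 := Fin.ext (by simp [hk0, h1.symm])
            subst hkk0
            rw [if_pos h1, if_pos h2, zero_add, ← WithBot.coe_add, hsum]
          · rw [if_neg h2, WithBot.bot_add, WithBot.add_bot]
            exact bot_le
        · rw [if_neg h1, WithBot.bot_add]
          exact bot_le
      · have h1 : (i : ℕ) + m = (k0 : ℕ) := rfl
        have h2 : (k0 : ℕ) + 1 = (j : ℕ) := by simp [hk0]; omega
        have heq : ((∑ k ∈ Finset.Ioc i j, t k : ℝ) : WithBot ℝ)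
            = mpPow (mpMul (tandemH n) (mpDiag t)) m i k0 + mpMul (tandemH n) (mpDiag t) k0 j := by
          rw [hterm k0, if_pos h1, if_pos h2, zero_add, ← WithBot.coe_add, hsum]
        rw [heq]
        exact Finset.le_sup (f := fun k => mpPow (mpMul (tandemH n) (mpDiag t)) m i k +
          mpMul (tandemH n) (mpDiag t) k j) (Finset.mem_univ k0)
    · rw [if_neg hij, ← le_bot_iff]
      apply Finset.sup_le
      intro k _
      rw [hterm k]
      by_cases h1 : (i : ℕ) + m = (k : ℕ)
      · have h2 : (k : ℕ) + 1 ≠ (j : ℕ) := by omega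
        rw [if_neg h2, WithBot.bot_add, WithBot.add_bot]
      · rw [if_neg h1, WithBot.bot_add]

lemma acyclic_pow_bound {n : ℕ} (G : Matrix (Fin n) (Fin n) (WithBot ℝ))
    (hG01 : ∀ i j, G i j = 0 ∨ G i j = ⊥)
    (hGtri : ∀ i j : Fin n, ¬ i < j → G i j = ⊥)
    (t : Fin n → ℝ) (ht : ∀ i, 0 ≤ t i) :
    ∀ q, 1 ≤ q → ∀ i j : Fin n,
      mpPow (mpMul G (mpDiag t)) q i j ≤
        if (i : ℕ) + q ≤ (j : ℕ) then ((∑ k ∈ Finset.Ioc i j, t k : ℝ) : WithBot ℝ) else ⊥ := by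
  intro q hq
  induction q with
  | zero => omega
  | succ q ih =>
    intro i j
    rcases Nat.eq_or_lt_of_le hq with h1 | h1
    · -- q + 1 = 1, i.e. q = 0
      have hq0 : q = 0 := by omega
      subst hq0
      show mpMul (mpId n) (mpMul G (mpDiag t)) i j ≤ _
      rw [mpId_mul_apply, mpMul_diag_apply]
      rcases hG01 i j with hG | hG
      · have hij : i < j := by
          by_contra hc
          rw [hGtri i j hc] at hG
          exact absurd hG (by simp)
        have hle : (i : ℕ) + 1 ≤ (j : ℕ) := hij
        rw [if_pos hle, hG, zero_add, WithBot.coe_le_coe]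
        exact Finset.single_le_sum (f := fun k => t k) (fun k _ => ht k)
          (Finset.mem_Ioc.mpr ⟨hij, le_refl j⟩)
      · rw [hG, WithBot.bot_add]
        exact bot_le
    · have hq' : 1 ≤ q := by omega
      rw [mpPow_succ_apply]
      apply Finset.sup_le
      intro k _
      rw [mpMul_diag_apply]
      by_cases h2 : (i : ℕ) + q ≤ (k : ℕ)
      · rcases hG01 k j with hG | hG
        · have hkj : k < j := by
            by_contra hc
            rw [hGtri k j hc] at hG
            exact absurd hG (by simp)
          have hle : (i : ℕ) + (q + 1) ≤ (j : ℕ) := by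
            have := Fin.lt_def.mp hkj; omega
          rw [if_pos hle, hG, zero_add]
          have hIH := ih hq' i k
          rw [if_pos h2] at hIH
          refine le_trans (add_le_add_left hIH _) ?_
          rw [← WithBot.coe_add, WithBot.coe_le_coe]
          have hik : i ≤ k := by
            rw [Fin.le_def]; omega
          rw [← sum_Ioc_split t hik (le_of_lt hkj)]
          have : t j ≤ ∑ x ∈ Finset.Ioc k j, t x :=
            Finset.single_le_sum (f := fun x => t x) (fun x _ => ht x)
              (Finset.mem_Ioc.mpr ⟨hkj, le_refl j⟩)
          linarith
        · rw [hG, WithBot.bot_add, WithBot.add_bot]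
          exact bot_le
      · have hIH := ih hq' i k
        rw [if_neg h2, le_bot_iff] at hIH
        rw [hIH, WithBot.bot_add]
        exact bot_le

/-- For every integer `q ≥ 1` and every diagonal matrix `T` with nonnegative
real diagonal entries, the max-plus power `(G ⊗ T)^q` is entrywise dominated by the max-plus
sum `(H ⊗ T) ⊕ (H ⊗ T)² ⊕ ⋯ ⊕ (H ⊗ T)ⁿ`. -/
theorem pow_mul_acyclic_diag_le_tandem_powers_sum
    {n : ℕ} (hn : 1 ≤ n) (G : Matrix (Fin n) (Fin n) (WithBot ℝ))
    (hG01 : ∀ i j, G i j = 0 ∨ G i j = ⊥)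
    (hGtri : ∀ i j : Fin n, ¬ i < j → G i j = ⊥)
    (t : Fin n → ℝ) (ht : ∀ i, 0 ≤ t i)
    (q : ℕ) (hq : 1 ≤ q) :
    ∀ i j, mpPow (mpMul G (mpDiag t)) q i j ≤
      (Finset.Icc 1 n).sup (fun m => mpPow (mpMul (tandemH n) (mpDiag t)) m i j) := by
  intro i j
  have hb := acyclic_pow_bound G hG01 hGtri t ht q hq i j
  by_cases hij : (i : ℕ) + q ≤ (j : ℕ)
  · rw [if_pos hij] at hb
    set m := (j : ℕ) - (i : ℕ) with hm
    have hm1 : 1 ≤ m := by omega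
    have hmn : m ≤ n := by have := j.isLt; omega
    have heq : (i : ℕ) + m = (j : ℕ) := by omega
    have htp := tandem_pow_apply t m i j
    rw [if_pos heq] at htp
    exact le_trans (le_of_le_of_eq hb htp.symm) (Finset.le_sup (f := fun m =>
      mpPow (mpMul (tandemH n) (mpDiag t)) m i j) (Finset.mem_Icc.mpr ⟨hm1, hmn⟩))
  · rw [if_neg hij, le_bot_iff] at hb
    rw [hb]
    exact bot_le
end
end

section
/- (Lemma 2) Consider an acyclic fork-join queueing network with n nodes governed by the max-plus recursion x(k) = A(k) ⊗ x(k−1), where A(k) = (⊕_{j=0}^{p} (𝒯_k ⊗ Gᵀ)^j) ⊗ 𝒯_k, G is the (strictly upper triangular 0/ε) support matrix of the network, p is the length of the longest path in the network graph (so G^q = 𝓔 for all q > p), and 𝒯_k = diag(τ_{1k}, …, τ_{nk}). Suppose that on a probability space the service times τ_{ik} are nonnegative real random variables such that for each fixed i the sequence τ_{i1}, τ_{i2}, … is independent and identically distributed with finite mean E[τ_{i1}] ≥ 0 and finite variance D[τ_{i1}] (no independence across different i is assumed), and let x(0) be the zero vector. Then the cycle time γ = lim_{k→∞} ‖x(k)‖/k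 exists almost surely and equals γ = max{E[τ_{11}], …, E[τ_{n1}]}, where ‖x‖ = max_i x_i. -/
open Finset

noncomputable section

namespace FJAux

open Matrix

lemma mpMul_apply {n : ℕ} (A B : Matrix (Fin n) (Fin n) (WithBot ℝ)) (i j : Fin n) :
    mpMul A B i j = Finset.univ.sup fun k => A i k + B k j := rfl

lemma mpSup_apply {n : ℕ} (s : Finset ℕ) (f : ℕ → Matrix (Fin n) (Fin n) (WithBot ℝ))
    (i j : Fin n) : mpSup s f i j = s.sup fun q => f q i j := rfl

lemma mpDiag_apply {n : ℕ} (t : Fin n → ℝ) (i j : Fin n) :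
    mpDiag t i j = if i = j then (t i : WithBot ℝ) else ⊥ := rfl

lemma mpId_apply {n : ℕ} (i j : Fin n) :
    mpId n i j = if i = j then (0 : WithBot ℝ) else ⊥ := rfl

lemma mpPow_zero {n : ℕ} (A : Matrix (Fin n) (Fin n) (WithBot ℝ)) : mpPow A 0 = mpId n := rfl

lemma mpPow_succ {n : ℕ} (A : Matrix (Fin n) (Fin n) (WithBot ℝ)) (q : ℕ) :
    mpPow A (q + 1) = mpMul (mpPow A q) A := rfl

lemma mpMulVec_apply {n : ℕ} (A : Matrix (Fin n) (Fin n) (WithBot ℝ)) (v : Fin n → WithBot ℝ)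
    (i : Fin n) : mpMulVec A v i = Finset.univ.sup fun j => A i j + v j := rfl

variable {n : ℕ} (p : ℕ) (G : Matrix (Fin n) (Fin n) (WithBot ℝ))

/-- The step matrix `A(t)`. -/
def Amat (t : Fin n → ℝ) : Matrix (Fin n) (Fin n) (WithBot ℝ) :=
  mpMul (mpSup (Finset.range (p + 1))
      (fun m => mpPow (mpMul (mpDiag t) Gᵀ) m)) (mpDiag t)

lemma Amat_diag_ge (t : Fin n → ℝ) (i : Fin n) :
    (t i : WithBot ℝ) ≤ Amat p G t i i := by
  have h0 : (0 : WithBot ℝ) ≤ mpSup (Finset.range (p + 1))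
      (fun m => mpPow (mpMul (mpDiag t) Gᵀ) m) i i := by
    have h1 : mpPow (mpMul (mpDiag t) Gᵀ) 0 i i = 0 := by
      rw [mpPow_zero, mpId_apply, if_pos rfl]
    rw [mpSup_apply, ← h1]
    exact Finset.le_sup (f := fun q => mpPow (mpMul (mpDiag t) Gᵀ) q i i)
      (Finset.mem_range.2 (Nat.succ_pos p))
  have hd : mpDiag t i i = (t i : WithBot ℝ) := by rw [mpDiag_apply, if_pos rfl]
  have key : mpSup (Finset.range (p + 1)) (fun m => mpPow (mpMul (mpDiag t) Gᵀ) m) i i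
      + mpDiag t i i ≤ Amat p G t i i := by
    rw [show Amat p G t i i = _ from mpMul_apply _ _ i i]
    exact Finset.le_sup (f := fun k => mpSup (Finset.range (p + 1))
      (fun m => mpPow (mpMul (mpDiag t) Gᵀ) m) i k + mpDiag t k i) (Finset.mem_univ i)
  refine le_trans ?_ key
  rw [hd]
  calc (t i : WithBot ℝ) = 0 + (t i : WithBot ℝ) := (zero_add _).symm
    _ ≤ _ := add_le_add h0 le_rfl

variable (hG01 : ∀ i j, G i j = 0 ∨ G i j = ⊥)
  (hGtri : ∀ i j : Fin n, ¬ i < j → G i j = ⊥)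

include hG01 hGtri

lemma step_le (t : Fin n → ℝ) (l j : Fin n) :
    mpMul (mpDiag t) Gᵀ l j ≤ if j < l then (t l : WithBot ℝ) else ⊥ := by
  rw [mpMul_apply]
  refine Finset.sup_le fun r _ => ?_
  by_cases hlr : l = r
  · subst hlr
    by_cases hjl : j < l
    · simp only [if_pos hjl]
      rcases hG01 j l with h | h
      · simp [mpDiag_apply, Matrix.transpose_apply, h]
      · simp [mpDiag_apply, Matrix.transpose_apply, h]
    · have : G j l = ⊥ := hGtri j l (by simpa using hjl)
      simp [mpDiag_apply, Matrix.transpose_apply, this]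
  · simp [mpDiag_apply, hlr]

lemma pow_le (t : Fin n → ℝ) (ht : ∀ i, 0 ≤ t i) (m : ℕ) (i j : Fin n) :
    mpPow (mpMul (mpDiag t) Gᵀ) m i j ≤
      if j ≤ i then ((∑ r ∈ Finset.Ioc j i, t r : ℝ) : WithBot ℝ) else ⊥ := by
  induction m generalizing i j with
  | zero =>
    by_cases h : i = j
    · subst h
      rw [mpPow_zero, mpId_apply, if_pos rfl, if_pos le_rfl]
      simp
    · rw [mpPow_zero, mpId_apply, if_neg h]
      exact bot_le
  | succ m ih =>
    rw [mpPow_succ, mpMul_apply]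
    refine Finset.sup_le fun l _ => ?_
    have h1 := ih i l
    have h2 := step_le G hG01 hGtri t l j
    by_cases hli : l ≤ i
    · by_cases hjl : j < l
      · have hji : j ≤ i := le_trans (le_of_lt hjl) hli
        rw [if_pos hli] at h1
        rw [if_pos hjl] at h2
        rw [if_pos hji]
        refine le_trans (add_le_add h1 h2) ?_
        rw [← WithBot.coe_add, WithBot.coe_le_coe]
        have hsub : Finset.Icc l i ⊆ Finset.Ioc j i := fun r hr => by
          rw [Finset.mem_Icc] at hr
          exact Finset.mem_Ioc.2 ⟨lt_of_lt_of_le hjl hr.1, hr.2⟩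
        calc (∑ r ∈ Finset.Ioc l i, t r) + t l = ∑ r ∈ Finset.Icc l i, t r := by
              rw [Finset.Icc_eq_cons_Ioc hli, Finset.sum_cons]; ring
          _ ≤ ∑ r ∈ Finset.Ioc j i, t r :=
              Finset.sum_le_sum_of_subset_of_nonneg hsub (fun r _ _ => ht r)
      · rw [if_neg hjl] at h2
        have : mpMul (mpDiag t) Gᵀ l j = ⊥ := le_bot_iff.1 h2
        rw [this, WithBot.add_bot]
        exact bot_le
    · rw [if_neg hli] at h1
      have : mpPow (mpMul (mpDiag t) Gᵀ) m i l = ⊥ := le_bot_iff.1 h1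
      rw [this, WithBot.bot_add]
      exact bot_le

lemma Amat_le (t : Fin n → ℝ) (ht : ∀ i, 0 ≤ t i) (i j : Fin n) :
    Amat p G t i j ≤
      if j ≤ i then ((∑ r ∈ Finset.Icc j i, t r : ℝ) : WithBot ℝ) else ⊥ := by
  rw [Amat, mpMul_apply]
  refine Finset.sup_le fun l _ => ?_
  by_cases hlj : l = j
  · subst hlj
    have hsup : mpSup (Finset.range (p + 1)) (fun m => mpPow (mpMul (mpDiag t) Gᵀ) m) i l ≤
        if l ≤ i then ((∑ r ∈ Finset.Ioc l i, t r : ℝ) : WithBot ℝ) else ⊥ := by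
      rw [mpSup_apply]
      exact Finset.sup_le fun m _ => pow_le G hG01 hGtri t ht m i l
    by_cases hli : l ≤ i
    · rw [if_pos hli] at hsup ⊢
      have hd : mpDiag t l l = (t l : WithBot ℝ) := by rw [mpDiag_apply, if_pos rfl]
      refine le_trans (add_le_add hsup (le_of_eq hd)) ?_
      rw [← WithBot.coe_add, WithBot.coe_le_coe]
      rw [Finset.Icc_eq_cons_Ioc hli, Finset.sum_cons]
      linarith [le_refl (∑ r ∈ Finset.Ioc l i, t r)]
    · rw [if_neg hli] at hsup ⊢
      have : mpSup (Finset.range (p + 1)) (fun m => mpPow (mpMul (mpDiag t) Gᵀ) m) i l = ⊥ :=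
        le_bot_iff.1 hsup
      rw [this, WithBot.bot_add]
  · have : mpDiag t l j = ⊥ := by rw [mpDiag_apply, if_neg hlj]
    rw [this, WithBot.add_bot]
    exact bot_le

section Vec

variable (τ' : ℕ → Fin n → ℝ) (hτ : ∀ k i, 0 ≤ τ' k i)
  (x : ℕ → Fin n → WithBot ℝ)
  (hx0 : x 0 = fun _ => (0 : WithBot ℝ))
  (hrec : ∀ k, x (k + 1) = mpMulVec (Amat p G (τ' k)) (x k))

include hτ hx0 hrec

omit hG01 hGtri in
lemma x_lower : ∀ k i, ((∑ l ∈ Finset.range k, τ' l i : ℝ) : WithBot ℝ) ≤ x k i := by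
  intro k
  induction k with
  | zero => intro i; simp [hx0]
  | succ k ih =>
    intro i
    rw [hrec k, mpMulVec_apply]
    refine le_trans ?_ (Finset.le_sup
      (f := fun j => Amat p G (τ' k) i j + x k j) (Finset.mem_univ i))
    rw [Finset.sum_range_succ, WithBot.coe_add, add_comm]
    exact add_le_add (Amat_diag_ge p G (τ' k) i) (ih i)

lemma x_upper (m : Fin n → ℝ) (γ ε' C' : ℝ) (hε' : 0 ≤ ε') (hC' : 0 ≤ C') (hγ : 0 ≤ γ)
    (hφ : ∀ (i : Fin n) (k : ℕ), |(∑ l ∈ Finset.range k, τ' l i) - m i * k| ≤ ε' * k + C')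
    (hm : ∀ i, m i ≤ γ) :
    ∀ k i, x k i ≤ (((γ * k + ((∑ l ∈ Finset.range k, τ' l i) - m i * k) + (ε' * k + C')
      + (i : ℕ) * (γ + 6 * (ε' * (k + 1) + C'))) : ℝ) : WithBot ℝ) := by
  intro k
  induction k with
  | zero =>
    intro i
    rw [hx0]
    show (0 : WithBot ℝ) ≤ _
    rw [show (0 : WithBot ℝ) = ((0 : ℝ) : WithBot ℝ) from rfl, WithBot.coe_le_coe]
    have h1 : (0:ℝ) ≤ (i : ℕ) * (γ + 6 * (ε' * (0 + 1) + C')) := by positivity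
    simp only [Finset.range_zero, Finset.sum_empty, Nat.cast_zero]
    nlinarith
  | succ k ih =>
    intro i
    rw [hrec k, mpMulVec_apply]
    refine Finset.sup_le fun j _ => ?_
    have hA := Amat_le p G hG01 hGtri (τ' k) (hτ k) i j
    by_cases hji : j ≤ i
    · rw [if_pos hji] at hA
      refine le_trans (add_le_add hA (ih j)) ?_
      rw [← WithBot.coe_add, WithBot.coe_le_coe]
      -- now a real inequality
      have hτbd : ∀ r : Fin n, τ' k r ≤ γ + 2 * (ε' * (k + 1) + C') := by
        intro r
        have e1 : τ' k r = (∑ l ∈ Finset.range (k+1), τ' l r)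
            - (∑ l ∈ Finset.range k, τ' l r) := by
          rw [Finset.sum_range_succ]; ring
        have b1 := abs_le.1 (hφ r (k+1))
        have b2 := abs_le.1 (hφ r k)
        have hmr := hm r
        have hk : (((k:ℕ)+1 : ℕ) : ℝ) = (k : ℝ) + 1 := by push_cast; ring
        rw [hk] at b1
        have : ε' * k ≤ ε' * (k+1) := by nlinarith
        nlinarith [hmr, b1.1, b1.2, b2.1, b2.2]
      have hb1 := abs_le.1 (hφ j k)
      have hb2 := abs_le.1 (hφ i (k+1))
      have hk1 : (((k:ℕ)+1 : ℕ) : ℝ) = (k : ℝ) + 1 := by push_cast; ring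
      rw [hk1] at hb2
      have hsum : (∑ r ∈ Finset.Icc j i, τ' k r)
          ≤ ((Finset.Icc j i).card : ℝ) * (γ + 2 * (ε' * (k + 1) + C')) := by
        calc (∑ r ∈ Finset.Icc j i, τ' k r)
            ≤ ∑ _r ∈ Finset.Icc j i, (γ + 2 * (ε' * (k + 1) + C')) :=
              Finset.sum_le_sum fun r _ => hτbd r
          _ = _ := by rw [Finset.sum_const, nsmul_eq_mul]
      have hcard : ((Finset.Icc j i).card : ℝ) = (i : ℕ) - (j : ℕ) + 1 := by
        rw [Fin.card_Icc]
        have : (j : ℕ) ≤ (i : ℕ) + 1 := Nat.le_succ_of_le hji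
        rw [Nat.cast_sub this]
        push_cast; ring
      rw [hcard] at hsum
      have hEmon : ε' * (k + 1) + C' ≤ ε' * ((k:ℝ) + 1 + 1) + C' := by nlinarith
      rcases eq_or_lt_of_le hji with heq | hlt
      · -- j = i
        have hji' : j = i := le_antisymm hji (le_of_eq heq.symm)
        subst hji'
        have hIcc : Finset.Icc j j = {j} := Finset.Icc_self j
        rw [hIcc, Finset.sum_singleton]
        have e1 : τ' k j = (∑ l ∈ Finset.range (k+1), τ' l j)
            - (∑ l ∈ Finset.range k, τ' l j) := by
          rw [Finset.sum_range_succ]; ring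
        have hDm : ((j:ℕ):ℝ) * (γ + 6 * (ε' * (k + 1) + C'))
            ≤ ((j:ℕ):ℝ) * (γ + 6 * (ε' * ((k:ℝ) + 1 + 1) + C')) := by
          apply mul_le_mul_of_nonneg_left (by nlinarith) (by positivity)
        push_cast
        push_cast at ih hb1 hb2 e1 hDm ⊢
        nlinarith [hm j, hb1.1, hb1.2, hb2.1, hb2.2]
      · -- j < i
        have hlt' : ((j:ℕ):ℝ) + 1 ≤ ((i:ℕ):ℝ) := by
          have : (j:ℕ) < (i:ℕ) := hlt
          exact_mod_cast Nat.succ_le_of_lt this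
        have hE : (0:ℝ) ≤ ε' * (k + 1) + C' := by positivity
        have hE2 : (0:ℝ) ≤ ε' * ((k:ℝ) + 1 + 1) + C' := by positivity
        have hi0 : (0:ℝ) ≤ ((i:ℕ):ℝ) := by positivity
        have hj0 : (0:ℝ) ≤ ((j:ℕ):ℝ) := by positivity
        refine le_trans (add_le_add hsum le_rfl) ?_
        push_cast
        nlinarith [mul_le_mul_of_nonneg_right hlt' hE,
          mul_le_mul_of_nonneg_left hEmon hi0,
          mul_le_mul_of_nonneg_left hEmon hj0,
          mul_nonneg hi0 hE2, mul_nonneg hj0 hE]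
    · rw [if_neg hji] at hA
      rw [le_bot_iff.1 hA, WithBot.bot_add]
      exact bot_le

end Vec

end FJAux

open MeasureTheory ProbabilityTheory Matrix

set_option maxHeartbeats 2000000

/-- **Lemma 2.** Consider an acyclic fork-join queueing network with `n` nodes
governed by the max-plus recursion `x(k) = A(k) ⊗ x(k-1)`, where
`A(k) = (⊕_{j=0}^{p} (𝒯ₖ ⊗ Gᵀ)^j) ⊗ 𝒯ₖ`, `G` is the (strictly upper triangular, `0`/`ε`)
support matrix, `p` satisfies `G^q = 𝓔` for all `q > p`, and
`𝒯ₖ = diag(τ_{1k}, …, τ_{nk})`.  Suppose the service times `τ i k` are nonnegative real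
random variables such that for each fixed `i` the sequence `τ i 0, τ i 1, …` is i.i.d. with
finite mean and finite variance (no independence across different `i` assumed), and let
`x(0)` be the zero vector.  Then almost surely `‖x(k)‖ / k` converges, as `k → ∞`, to the
cycle time `γ = max_i E[τ i]`. -/
theorem forkJoin_cycle_time
    {n : ℕ} (hn : 1 ≤ n)
    {Ω : Type*} [MeasurableSpace Ω] (μ : Measure Ω) [IsProbabilityMeasure μ]
    (G : Matrix (Fin n) (Fin n) (WithBot ℝ))
    (hG01 : ∀ i j, G i j = 0 ∨ G i j = ⊥)
    (hGtri : ∀ i j : Fin n, ¬ i < j → G i j = ⊥)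
    (p : ℕ) (hp : ∀ q, p < q → mpPow G q = botMat n)
    (τ : Fin n → ℕ → Ω → ℝ)
    (hmeas : ∀ i k, Measurable (τ i k))
    (hnonneg : ∀ i k ω, 0 ≤ τ i k ω)
    (hindep : ∀ i, iIndepFun (fun k => τ i k) μ)
    (hident : ∀ i k, IdentDistrib (τ i k) (τ i 0) μ μ)
    (hmean : ∀ i, Integrable (τ i 0) μ)
    (hvar : ∀ i, MemLp (τ i 0) 2 μ)
    (x : Ω → ℕ → Fin n → WithBot ℝ)
    (hx0 : ∀ ω, x ω 0 = fun _ => (0 : WithBot ℝ))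
    (hxrec : ∀ ω k, x ω (k + 1) =
      mpMulVec
        (mpMul
          (mpSup (Finset.range (p + 1))
            (fun m => mpPow (mpMul (mpDiag (fun i => τ i k ω)) Gᵀ) m))
          (mpDiag (fun i => τ i k ω)))
        (x ω k)) :
    ∀ᵐ ω ∂μ, Filter.Tendsto
      (fun k : ℕ => WithBot.unbotD 0 (Finset.univ.sup (x ω k)) / (k : ℝ))
      Filter.atTop
      (nhds (Finset.univ.sup' (Finset.univ_nonempty_iff.mpr ⟨⟨0, hn⟩⟩)
        (fun i => ∫ ω, τ i 0 ω ∂μ))) := by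
  classical
  set m : Fin n → ℝ := fun i => ∫ ω, τ i 0 ω ∂μ with hm_def
  have hne : (Finset.univ : Finset (Fin n)).Nonempty :=
    Finset.univ_nonempty_iff.mpr ⟨⟨0, hn⟩⟩
  set γ : ℝ := Finset.univ.sup' (Finset.univ_nonempty_iff.mpr ⟨⟨0, hn⟩⟩) m with hγ_def
  have hmγ : ∀ i, m i ≤ γ := fun i => Finset.le_sup' m (Finset.mem_univ i)
  have hm0 : ∀ i, 0 ≤ m i := fun i => integral_nonneg (fun ω => hnonneg i 0 ω)
  have hγ0 : 0 ≤ γ := le_trans (hm0 ⟨0, hn⟩) (hmγ _)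
  obtain ⟨i0, -, hi0⟩ := Finset.exists_mem_eq_sup'
    (Finset.univ_nonempty_iff.mpr ⟨⟨0, hn⟩⟩) m
  have hSLLN : ∀ᵐ ω ∂μ, ∀ i : Fin n, Filter.Tendsto
      (fun k : ℕ => (∑ l ∈ Finset.range k, τ i l ω) / k) Filter.atTop (nhds (m i)) := by
    rw [ae_all_iff]
    intro i
    exact strong_law_ae_real (fun k => τ i k) (hmean i)
      (fun a b hab => (hindep i).indepFun hab) (fun k => hident i k)
  filter_upwards [hSLLN] with ω hω
  -- notation for this fixed ω
  set τ' : ℕ → Fin n → ℝ := fun k i => τ i k ω with hτ'_def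
  have hτ'0 : ∀ k i, 0 ≤ τ' k i := fun k i => hnonneg i k ω
  set S : Fin n → ℕ → ℝ := fun i k => ∑ l ∈ Finset.range k, τ' l i with hS_def
  have hrec' : ∀ k, x ω (k + 1) = mpMulVec (FJAux.Amat p G (τ' k)) (x ω k) :=
    fun k => hxrec ω k
  have hlow : ∀ k i, ((S i k : ℝ) : WithBot ℝ) ≤ x ω k i :=
    FJAux.x_lower p G τ' hτ'0 (x ω) (hx0 ω) hrec'
  rw [Metric.tendsto_atTop]
  intro ε hε
  set ε' : ℝ := ε / (4 * (6 * n + 2)) with hε'_def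
  have hε'0 : 0 < ε' := by positivity
  -- eventual SLLN bound
  have hev : ∀ᶠ k : ℕ in Filter.atTop, ∀ i, |S i k - m i * k| ≤ ε' * k := by
    have h1 : ∀ i : Fin n, ∀ᶠ k : ℕ in Filter.atTop, |S i k / k - m i| ≤ ε' := by
      intro i
      have h2 := Metric.tendsto_atTop.1 (hω i) ε' hε'0
      obtain ⟨N, hN⟩ := h2
      refine Filter.eventually_atTop.2 ⟨N, fun k hk => ?_⟩
      have := hN k hk
      rw [Real.dist_eq] at this
      exact le_of_lt this
    have h3 : ∀ᶠ k : ℕ in Filter.atTop, ∀ i : Fin n, |S i k / k - m i| ≤ ε' :=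
      Filter.eventually_all.2 h1
    filter_upwards [h3, Filter.eventually_ge_atTop 1] with k hk hk1 i
    have hk0 : (0:ℝ) < (k:ℝ) := by exact_mod_cast hk1
    have : S i k - m i * k = (S i k / k - m i) * k := by field_simp
    rw [this, abs_mul, abs_of_pos hk0]
    exact mul_le_mul_of_nonneg_right (hk i) (le_of_lt hk0)
  obtain ⟨N₁, hN₁⟩ := Filter.eventually_atTop.1 hev
  set C' : ℝ := ∑ l ∈ Finset.range N₁, ∑ i : Fin n, |S i l - m i * l| with hC'_def
  have hC'0 : 0 ≤ C' := Finset.sum_nonneg fun l _ =>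
    Finset.sum_nonneg fun i _ => abs_nonneg _
  have hφ : ∀ (i : Fin n) (k : ℕ), |S i k - m i * k| ≤ ε' * k + C' := by
    intro i k
    by_cases hk : N₁ ≤ k
    · have := hN₁ k hk i
      linarith
    · push_neg at hk
      have h1 : |S i k - m i * k| ≤ ∑ j : Fin n, |S j k - m j * k| :=
        Finset.single_le_sum (f := fun j => |S j k - m j * (k:ℝ)|)
          (fun j _ => abs_nonneg _) (Finset.mem_univ i)
      have h2 : (∑ j : Fin n, |S j k - m j * k|) ≤ C' := by
        rw [hC'_def]
        exact Finset.single_le_sum (f := fun l => ∑ j : Fin n, |S j l - m j * l|)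
          (fun l _ => Finset.sum_nonneg fun j _ => abs_nonneg _)
          (Finset.mem_range.2 hk)
      have h3 : (0:ℝ) ≤ ε' * k := by positivity
      linarith
  have hupp : ∀ k i, x ω k i ≤ (((γ * k + (S i k - m i * k) + (ε' * k + C')
      + (i : ℕ) * (γ + 6 * (ε' * (k + 1) + C'))) : ℝ) : WithBot ℝ) :=
    FJAux.x_upper p G hG01 hGtri τ' hτ'0 (x ω) (hx0 ω) hrec' m γ ε' C'
      (le_of_lt hε'0) hC'0 hγ0 hφ hmγ
  -- global upper bound
  set Cup : ℝ := 2 * C' + n * (γ + 6 * ε' + 6 * C') with hCup_def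
  have hCup0 : 0 ≤ Cup := by positivity
  have hR : ∀ k : ℕ, WithBot.unbotD 0 (Finset.univ.sup (x ω k))
      ≤ γ * k + (2 + 6 * n) * ε' * k + Cup := by
    intro k
    have hRk0 : (0:ℝ) ≤ γ * k + (2 + 6 * n) * ε' * k + Cup := by positivity
    have hsup : Finset.univ.sup (x ω k)
        ≤ (((γ * k + (2 + 6 * n) * ε' * k + Cup) : ℝ) : WithBot ℝ) := by
      refine Finset.sup_le fun i _ => le_trans (hupp k i) ?_
      rw [WithBot.coe_le_coe]
      have hφk := abs_le.1 (hφ i k)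
      have hin : ((i : ℕ) : ℝ) ≤ (n : ℝ) := by
        exact_mod_cast le_of_lt i.isLt
      have hD0 : (0:ℝ) ≤ γ + 6 * (ε' * (k + 1) + C') := by positivity
      have := mul_le_mul_of_nonneg_right hin hD0
      nlinarith [hφk.2, mul_nonneg (le_of_lt hε'0) (Nat.cast_nonneg k : (0:ℝ) ≤ k)]
    cases hv : Finset.univ.sup (x ω k) with
    | bot => simpa using hRk0
    | coe b =>
      rw [hv] at hsup
      rw [WithBot.unbotD_coe]
      exact_mod_cast hsup
  have hL : ∀ k : ℕ, S i0 k ≤ WithBot.unbotD 0 (Finset.univ.sup (x ω k)) := by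
    intro k
    have h1 : ((S i0 k : ℝ) : WithBot ℝ) ≤ Finset.univ.sup (x ω k) :=
      le_trans (hlow k i0) (Finset.le_sup (Finset.mem_univ i0))
    cases hv : Finset.univ.sup (x ω k) with
    | bot => rw [hv] at h1; simp at h1
    | coe b =>
      rw [hv] at h1
      rw [WithBot.unbotD_coe]
      exact_mod_cast h1
  -- choose N₂ for constant/k terms
  have hdiv1 : Filter.Tendsto (fun k : ℕ => Cup / k) Filter.atTop (nhds 0) :=
    tendsto_const_div_atTop_nhds_zero_nat Cup
  have hdiv2 : Filter.Tendsto (fun k : ℕ => C' / k) Filter.atTop (nhds 0) :=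
    tendsto_const_div_atTop_nhds_zero_nat C'
  have hε4 : (0:ℝ) < ε / 4 := by positivity
  have hevfin : ∀ᶠ k : ℕ in Filter.atTop,
      Cup / k < ε / 4 ∧ C' / k < ε / 4 ∧ 1 ≤ k :=
    (hdiv1.eventually_lt_const hε4).and ((hdiv2.eventually_lt_const hε4).and
      (Filter.eventually_ge_atTop 1)) |>.mono (fun k h => ⟨h.1, h.2.1, h.2.2⟩)
  obtain ⟨N₂, hN₂⟩ := Filter.eventually_atTop.1 hevfin
  refine ⟨N₂, fun k hk => ?_⟩
  obtain ⟨hd1, hd2, hk1⟩ := hN₂ k hk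
  have hk0 : (0:ℝ) < (k:ℝ) := by exact_mod_cast hk1
  set u : ℝ := WithBot.unbotD 0 (Finset.univ.sup (x ω k)) with hu_def
  -- upper estimate
  have hub : u / k ≤ γ + (2 + 6 * n) * ε' + Cup / k := by
    have h1 : u / k ≤ (γ * k + (2 + 6 * n) * ε' * k + Cup) / k := by
      apply div_le_div_of_nonneg_right (hR k) hk0.le |>.trans_eq rfl
    have h2 : (γ * k + (2 + 6 * n) * ε' * k + Cup) / k
        = γ + (2 + 6 * n) * ε' + Cup / k := by
      field_simp
    linarith [h1, h2.le, h2.ge]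
  -- lower estimate
  have hlb : γ - ε' - C' / k ≤ u / k := by
    have h1 : m i0 * k - (ε' * k + C') ≤ S i0 k := by
      have := abs_le.1 (hφ i0 k)
      linarith [this.1]
    have h2 : S i0 k / k ≤ u / k := div_le_div_of_nonneg_right (hL k) hk0.le |>.trans_eq rfl
    have h3 : (m i0 * k - (ε' * k + C')) / k = m i0 - ε' - C' / k := by
      field_simp
      ring
    have h4 : (m i0 * k - (ε' * k + C')) / k ≤ S i0 k / k :=
      div_le_div_of_nonneg_right h1 hk0.le |>.trans_eq rfl
    rw [h3] at h4
    have hγm : γ = m i0 := hi0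
    linarith [h2, h4, hγm.le, hγm.ge]
  -- ε' arithmetic
  have hkey : (2 + 6 * (n:ℝ)) * ε' = ε / 4 := by
    rw [hε'_def]
    have hne2 : (6 * (n:ℝ) + 2) ≠ 0 := by positivity
    field_simp
    ring
  have hε'le : ε' ≤ ε / 4 := by
    rw [hε'_def]
    have h4 : (4:ℝ) ≤ 4 * (6 * (n:ℝ) + 2) := by
      nlinarith [(Nat.cast_nonneg n : (0:ℝ) ≤ (n:ℝ))]
    exact div_le_div_of_nonneg_left hε.le (by norm_num) h4
  rw [Real.dist_eq, abs_lt]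
  constructor
  · -- -(ε) < u/k - γ
    have : γ - ε / 4 - ε / 4 ≤ u / k := by linarith
    linarith
  · have : u / k ≤ γ + ε / 4 + ε / 4 := by linarith [hub, hkey.le, hkey.ge]
    linarith
end
end
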